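/- arXiv:2403.09521 — 2 statements merged into one kernel-verified Lean document; each statement's English description precedes it below -/
import Mathlib

section
/- Let M be a 2n×2n skew-symmetric matrix over a commutative ring (or the reals) such that M_{ij} = 0 whenever i ≡ j (mod 2). Define the n×n matrix M̃ by M̃_{ij} = M_{2i-1, 2j}. Then the Pfaffian of M equals the determinant of M̃. -/
open Matrix Equiv

/-- Pfaffian of a `2n × 2n` matrix, defined via the permutation sum formula. -/
noncomputable def pfaffian (n : ℕ) (M : Matrix (Fin (2 * n)) (Fin (2 * n)) ℝ) : ℝ :=
  (1 / (2 ^ n * (n.factorial : ℝ))) *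
    ∑ σ : Equiv.Perm (Fin (2 * n)),
      ((Equiv.Perm.sign σ : ℤ) : ℝ) *
        ∏ i : Fin n,
          M (σ ⟨2 * (i : ℕ), by have := i.isLt; omega⟩)
            (σ ⟨2 * (i : ℕ) + 1, by have := i.isLt; omega⟩)

namespace PfaffAux
def pe (n : ℕ) : Fin n × Fin 2 ≃ Fin (2 * n) where
  toFun p := ⟨2 * (p.1 : ℕ) + (p.2 : ℕ), by have h1 := p.1.isLt; have h2 := p.2.isLt; omega⟩
  invFun k := (⟨(k : ℕ) / 2, by have := k.isLt; omega⟩, ⟨(k : ℕ) % 2, by omega⟩)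
  left_inv p := by
    obtain ⟨⟨i, hi⟩, ⟨b, hb⟩⟩ := p
    ext <;> simp <;> omega
  right_inv k := by
    obtain ⟨k, hk⟩ := k
    ext
    simp
    omega
@[simp] lemma pe_val {n : ℕ} (i : Fin n) (b : Fin 2) : (pe n (i, b) : ℕ) = 2 * i + b := rfl
variable {n : ℕ}
def letterPerm (α β : Perm (Fin n)) : Perm (Fin n × Fin 2) :=
  Equiv.prodCongrLeft (fun b : Fin 2 => if b = 0 then α else β)
def swapPerm (εf : Fin n → Bool) : Perm (Fin n × Fin 2) :=
  Equiv.prodCongrRight (fun i : Fin n => if εf i then Equiv.swap (0 : Fin 2) 1 else Equiv.refl _)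
def Psi (εf : Fin n → Bool) (α β : Perm (Fin n)) : Perm (Fin (2 * n)) :=
  (pe n).permCongr (letterPerm α β * swapPerm εf)
lemma Psi_pe0 (εf : Fin n → Bool) (α β : Perm (Fin n)) (i : Fin n) :
    Psi εf α β (pe n (i, 0)) = if εf i then pe n (β i, 1) else pe n (α i, 0) := by
  simp only [Psi, permCongr_apply, symm_apply_apply, Perm.mul_apply, swapPerm,
    prodCongrRight_apply, letterPerm, prodCongrLeft_apply]
  cases h : εf i <;> simp [h, Equiv.swap_apply_left]
lemma Psi_pe1 (εf : Fin n → Bool) (α β : Perm (Fin n)) (i : Fin n) :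
    Psi εf α β (pe n (i, 1)) = if εf i then pe n (α i, 0) else pe n (β i, 1) := by
  simp only [Psi, permCongr_apply, symm_apply_apply, Perm.mul_apply, swapPerm,
    prodCongrRight_apply, letterPerm, prodCongrLeft_apply]
  cases h : εf i <;> simp [h, Equiv.swap_apply_right]


lemma sign_Psi (εf : Fin n → Bool) (α β : Perm (Fin n)) :
    Perm.sign (Psi εf α β) =
      (∏ i : Fin n, if εf i then (-1 : ℤˣ) else 1) * (Perm.sign α * Perm.sign β) := by
  rw [Psi, Perm.sign_permCongr, Perm.sign_mul, mul_comm]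
  congr 1
  · rw [swapPerm, Perm.sign_prodCongrRight]
    refine Finset.prod_congr rfl fun i _ => ?_
    cases h : εf i <;> simp [h, Perm.sign_swap (by decide : (0 : Fin 2) ≠ 1)]
  · rw [letterPerm, Perm.sign_prodCongrLeft, Fin.prod_univ_two]
    simp

lemma pe_zero {n : ℕ} (i : Fin n) (h : 2 * (i : ℕ) < 2 * n) :
    (⟨2 * (i : ℕ), h⟩ : Fin (2 * n)) = pe n (i, 0) := by ext; simp

lemma pe_one {n : ℕ} (i : Fin n) (h : 2 * (i : ℕ) + 1 < 2 * n) :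
    (⟨2 * (i : ℕ) + 1, h⟩ : Fin (2 * n)) = pe n (i, 1) := by ext; simp

-- injectivity
lemma pe_inj_fst {a b : Fin n} {c d : Fin 2} (h : pe n (a, c) = pe n (b, d)) : a = b ∧ c = d := by
  have := (pe n).injective h
  exact ⟨congrArg Prod.fst this, congrArg Prod.snd this⟩

lemma Psi_injective :
    Function.Injective
      (fun t : (Fin n → Bool) × Perm (Fin n) × Perm (Fin n) => Psi t.1 t.2.1 t.2.2) := by
  rintro ⟨ε1, α1, β1⟩ ⟨ε2, α2, β2⟩ h
  simp only at h
  have h0 : ∀ i : Fin n, Psi ε1 α1 β1 (pe n (i, 0)) = Psi ε2 α2 β2 (pe n (i, 0)) :=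
    fun i => by rw [h]
  have h1 : ∀ i : Fin n, Psi ε1 α1 β1 (pe n (i, 1)) = Psi ε2 α2 β2 (pe n (i, 1)) :=
    fun i => by rw [h]
  have hε : ε1 = ε2 := by
    funext i
    have h0i := h0 i
    rw [Psi_pe0, Psi_pe0] at h0i
    cases hb1 : ε1 i <;> cases hb2 : ε2 i <;> rw [hb1, hb2] at h0i <;> simp_all
  subst hε
  have hα : α1 = α2 := by
    ext i
    cases hb : ε1 i
    · have h0i := h0 i; rw [Psi_pe0, Psi_pe0, hb] at h0i; simp at h0i
      exact congrArg Fin.val h0i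
    · have h1i := h1 i; rw [Psi_pe1, Psi_pe1, hb] at h1i; simp at h1i
      exact congrArg Fin.val h1i
  have hβ : β1 = β2 := by
    ext i
    cases hb : ε1 i
    · have h1i := h1 i; rw [Psi_pe1, Psi_pe1, hb] at h1i; simp at h1i
      exact congrArg Fin.val h1i
    · have h0i := h0 i; rw [Psi_pe0, Psi_pe0, hb] at h0i; simp at h0i
      exact congrArg Fin.val h0i
  simp [hα, hβ]

-- surjectivity on good σ
lemma exists_Psi (σ : Perm (Fin (2 * n)))
    (h : ∀ i : Fin n, ((σ (pe n (i, 0))) : ℕ) % 2 ≠ ((σ (pe n (i, 1))) : ℕ) % 2) :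
    ∃ t : (Fin n → Bool) × Perm (Fin n) × Perm (Fin n), Psi t.1 t.2.1 t.2.2 = σ := by
  set ε : Fin n → Bool := fun i => decide (((σ (pe n (i, 0))) : ℕ) % 2 = 1) with hεdef
  set u : Fin n → Fin (2 * n) := fun i => cond (ε i) (σ (pe n (i, 1))) (σ (pe n (i, 0))) with hu
  set v : Fin n → Fin (2 * n) := fun i => cond (ε i) (σ (pe n (i, 0))) (σ (pe n (i, 1))) with hv
  have hu2 : ∀ i, (u i : ℕ) % 2 = 0 := by
    intro i
    by_cases hb : ((σ (pe n (i, 0))) : ℕ) % 2 = 1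
    · have hεi : ε i = true := by simp [hεdef, hb]
      simp only [hu, hεi, Bool.cond_true]
      have := h i; omega
    · have hεi : ε i = false := by simp [hεdef, hb]
      simp only [hu, hεi, Bool.cond_false]
      omega
  have hv2 : ∀ i, (v i : ℕ) % 2 = 1 := by
    intro i
    by_cases hb : ((σ (pe n (i, 0))) : ℕ) % 2 = 1
    · have hεi : ε i = true := by simp [hεdef, hb]
      simp only [hv, hεi, Bool.cond_true]
      exact hb
    · have hεi : ε i = false := by simp [hεdef, hb]
      simp only [hv, hεi, Bool.cond_false]
      have := h i; omega
  set f : Fin n → Fin n := fun i => ⟨(u i : ℕ) / 2, by have := (u i).isLt; omega⟩ with hf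
  set g : Fin n → Fin n := fun i => ⟨(v i : ℕ) / 2, by have := (v i).isLt; omega⟩ with hg
  have hfu : ∀ i, pe n (f i, 0) = u i := by
    intro i; ext; simp [hf]; have := hu2 i; omega
  have hgv : ∀ i, pe n (g i, 1) = v i := by
    intro i; ext; simp [hg]; have := hv2 i; omega
  have hfinj : Function.Injective f := by
    intro i j hij
    have huij : u i = u j := by rw [← hfu i, ← hfu j, hij]
    have huσ : ∀ k, ∃ b : Fin 2, u k = σ (pe n (k, b)) := by
      intro k; cases hεk : ε k
      · exact ⟨0, by simp [hu, hεk]⟩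
      · exact ⟨1, by simp [hu, hεk]⟩
    obtain ⟨b1, hb1⟩ := huσ i
    obtain ⟨b2, hb2⟩ := huσ j
    rw [hb1, hb2] at huij
    have := (pe n).injective (σ.injective huij)
    exact congrArg Prod.fst this
  have hginj : Function.Injective g := by
    intro i j hij
    have hvij : v i = v j := by rw [← hgv i, ← hgv j, hij]
    have hvσ : ∀ k, ∃ b : Fin 2, v k = σ (pe n (k, b)) := by
      intro k; cases hεk : ε k
      · exact ⟨1, by simp [hv, hεk]⟩
      · exact ⟨0, by simp [hv, hεk]⟩
    obtain ⟨b1, hb1⟩ := hvσ i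
    obtain ⟨b2, hb2⟩ := hvσ j
    rw [hb1, hb2] at hvij
    have := (pe n).injective (σ.injective hvij)
    exact congrArg Prod.fst this
  refine ⟨⟨ε, Equiv.ofBijective f (Finite.injective_iff_bijective.mp hfinj),
    Equiv.ofBijective g (Finite.injective_iff_bijective.mp hginj)⟩, ?_⟩
  apply Equiv.ext
  intro k
  have key : ∀ p : Fin n × Fin 2,
      Psi ε (Equiv.ofBijective f (Finite.injective_iff_bijective.mp hfinj))
        (Equiv.ofBijective g (Finite.injective_iff_bijective.mp hginj)) (pe n p) = σ (pe n p) := by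
    rintro ⟨i, b⟩
    have hb : b = 0 ∨ b = 1 := by omega
    rcases hb with hb | hb <;> subst hb
    · rw [Psi_pe0]
      cases hεi : ε i <;> simp only [hεi, if_true, if_false, Bool.false_eq_true, ofBijective_apply]
      · rw [hfu i]; simp [hu, hεi]
      · rw [hgv i]; simp [hv, hεi]
    · rw [Psi_pe1]
      cases hεi : ε i <;> simp only [hεi, if_true, if_false, Bool.false_eq_true, ofBijective_apply]
      · rw [hgv i]; simp [hv, hεi]
      · rw [hfu i]; simp [hu, hεi]
  have := key ((pe n).symm k)
  simpa using this

end PfaffAux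

open PfaffAux

theorem pfaffian_eq_det (n : ℕ) (M : Matrix (Fin (2 * n)) (Fin (2 * n)) ℝ)
    (hskew : Mᵀ = -M)
    (hzero : ∀ i j : Fin (2 * n), (i : ℕ) % 2 = (j : ℕ) % 2 → M i j = 0) :
    pfaffian n M =
      Matrix.det (Matrix.of fun i j : Fin n =>
        M ⟨2 * (i : ℕ), by have := i.isLt; omega⟩
          ⟨2 * (j : ℕ) + 1, by have := j.isLt; omega⟩) := by
  classical
  have hM' : ∀ a b : Fin (2 * n), M b a = - M a b := by
    intro a b
    have := congrFun (congrFun hskew a) b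
    simpa [Matrix.transpose_apply, Matrix.neg_apply] using this
  set F : Perm (Fin (2 * n)) → ℝ :=
    fun σ => ((Perm.sign σ : ℤ) : ℝ) * ∏ i : Fin n, M (σ (pe n (i, 0))) (σ (pe n (i, 1)))
    with hF
  set χ : ℤˣ →* ℝ := (Int.castRingHom ℝ).toMonoidHom.comp (Units.coeHom ℤ) with hχdef
  have hχ : ∀ u : ℤˣ, ((u : ℤ) : ℝ) = χ u := fun u => rfl
  have hsq : ∀ γ : Perm (Fin n), ((Perm.sign γ : ℤ) : ℝ) * ((Perm.sign γ : ℤ) : ℝ) = 1 := by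
    intro γ
    rcases Int.units_eq_one_or (Perm.sign γ) with h | h <;> rw [h] <;> norm_num
  -- value of F on Psi
  have F_Psi : ∀ (εf : Fin n → Bool) (α β : Perm (Fin n)),
      F (Psi εf α β) = ((Perm.sign α : ℤ) : ℝ) * ((Perm.sign β : ℤ) : ℝ) *
        ∏ i : Fin n, M (pe n (α i, 0)) (pe n (β i, 1)) := by
    intro εf α β
    have hterm : ∀ i : Fin n,
        M (Psi εf α β (pe n (i, 0))) (Psi εf α β (pe n (i, 1))) =
          (if εf i then (-1 : ℝ) else 1) * M (pe n (α i, 0)) (pe n (β i, 1)) := by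
      intro i
      rw [Psi_pe0, Psi_pe1]
      cases h : εf i
      · simp [h]
      · simp only [h, if_true]
        rw [hM']
        ring
    have hsign : ((Perm.sign (Psi εf α β) : ℤ) : ℝ) =
        (∏ i : Fin n, if εf i then (-1 : ℝ) else 1) *
          (((Perm.sign α : ℤ) : ℝ) * ((Perm.sign β : ℤ) : ℝ)) := by
      rw [hχ, sign_Psi, _root_.map_mul, _root_.map_mul, map_prod]
      congr 1
      refine Finset.prod_congr rfl fun i _ => ?_
      cases h : εf i <;> simp [h, hχdef]
    have hs2 : (∏ i : Fin n, if εf i then (-1 : ℝ) else 1) *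
        (∏ i : Fin n, if εf i then (-1 : ℝ) else 1) = 1 := by
      rw [← Finset.prod_mul_distrib]
      refine Finset.prod_eq_one fun i _ => ?_
      cases h : εf i <;> norm_num
    simp only [hF]
    rw [hsign]
    simp_rw [hterm]
    rw [Finset.prod_mul_distrib]
    calc (∏ i : Fin n, if εf i then (-1:ℝ) else 1) *
          (((Perm.sign α : ℤ):ℝ) * ((Perm.sign β : ℤ):ℝ)) *
          ((∏ i : Fin n, if εf i then (-1:ℝ) else 1) *
            ∏ i : Fin n, M (pe n (α i, 0)) (pe n (β i, 1)))
        = ((∏ i : Fin n, if εf i then (-1:ℝ) else 1) *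
            (∏ i : Fin n, if εf i then (-1:ℝ) else 1)) *
          (((Perm.sign α : ℤ):ℝ) * ((Perm.sign β : ℤ):ℝ) *
            ∏ i : Fin n, M (pe n (α i, 0)) (pe n (β i, 1))) := by ring
      _ = _ := by rw [hs2, one_mul]
  -- step 1 : restrict the sum to the image of Psi
  have sumA : ∑ σ : Perm (Fin (2 * n)), F σ =
      ∑ t : (Fin n → Bool) × Perm (Fin n) × Perm (Fin n), F (Psi t.1 t.2.1 t.2.2) := by
    have h1 : ∑ t : (Fin n → Bool) × Perm (Fin n) × Perm (Fin n), F (Psi t.1 t.2.1 t.2.2) =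
        ∑ σ ∈ Finset.univ.image
            (fun t : (Fin n → Bool) × Perm (Fin n) × Perm (Fin n) => Psi t.1 t.2.1 t.2.2), F σ :=
      (Finset.sum_image fun x _ y _ h => Psi_injective h).symm
    rw [h1]
    refine (Finset.sum_subset (Finset.subset_univ _) ?_).symm
    intro σ _ hσ
    have hnot : ¬ ∀ i : Fin n, ((σ (pe n (i, 0))) : ℕ) % 2 ≠ ((σ (pe n (i, 1))) : ℕ) % 2 := by
      intro hall
      obtain ⟨t, ht⟩ := exists_Psi σ hall
      exact hσ (Finset.mem_image.mpr ⟨t, Finset.mem_univ _, ht⟩)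
    push_neg at hnot
    obtain ⟨i, hi⟩ := hnot
    have hz : M (σ (pe n (i, 0))) (σ (pe n (i, 1))) = 0 := hzero _ _ hi
    simp only [hF]
    rw [Finset.prod_eq_zero (Finset.mem_univ i) hz, mul_zero]
  -- step 2 : sum over ε gives 2 ^ n
  have sumB : ∑ t : (Fin n → Bool) × Perm (Fin n) × Perm (Fin n), F (Psi t.1 t.2.1 t.2.2) =
      (2 : ℝ) ^ n * ∑ p : Perm (Fin n) × Perm (Fin n),
        ((Perm.sign p.1 : ℤ) : ℝ) * ((Perm.sign p.2 : ℤ) : ℝ) *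
          ∏ i : Fin n, M (pe n (p.1 i, 0)) (pe n (p.2 i, 1)) := by
    rw [Fintype.sum_prod_type]
    have : ∀ εf : Fin n → Bool,
        (∑ p : Perm (Fin n) × Perm (Fin n), F (Psi εf p.1 p.2)) =
          ∑ p : Perm (Fin n) × Perm (Fin n),
            ((Perm.sign p.1 : ℤ) : ℝ) * ((Perm.sign p.2 : ℤ) : ℝ) *
              ∏ i : Fin n, M (pe n (p.1 i, 0)) (pe n (p.2 i, 1)) := by
      intro εf
      exact Finset.sum_congr rfl fun p _ => F_Psi εf p.1 p.2
    rw [Finset.sum_congr rfl fun εf _ => this εf, Finset.sum_const]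
    simp [Fintype.card_fun, nsmul_eq_mul]
  -- step 3 : sum over (α, β) gives n! times the determinant
  have sumC : ∑ p : Perm (Fin n) × Perm (Fin n),
      ((Perm.sign p.1 : ℤ) : ℝ) * ((Perm.sign p.2 : ℤ) : ℝ) *
        ∏ i : Fin n, M (pe n (p.1 i, 0)) (pe n (p.2 i, 1)) =
      (n.factorial : ℝ) *
        ∑ τ : Perm (Fin n), ((Perm.sign τ : ℤ) : ℝ) *
          ∏ j : Fin n, M (pe n (j, 0)) (pe n (τ j, 1)) := by
    rw [Fintype.sum_prod_type]
    have hinner : ∀ α : Perm (Fin n),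
        (∑ β : Perm (Fin n), ((Perm.sign α : ℤ) : ℝ) * ((Perm.sign β : ℤ) : ℝ) *
          ∏ i : Fin n, M (pe n (α i, 0)) (pe n (β i, 1))) =
        ∑ τ : Perm (Fin n), ((Perm.sign τ : ℤ) : ℝ) *
          ∏ j : Fin n, M (pe n (j, 0)) (pe n (τ j, 1)) := by
      intro α
      rw [← Equiv.sum_comp (Equiv.mulRight α)
        (fun β => ((Perm.sign α : ℤ) : ℝ) * ((Perm.sign β : ℤ) : ℝ) *
          ∏ i : Fin n, M (pe n (α i, 0)) (pe n (β i, 1)))]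
      refine Finset.sum_congr rfl fun τ _ => ?_
      simp only [Equiv.coe_mulRight]
      have hprod : ∏ i : Fin n, M (pe n (α i, 0)) (pe n ((τ * α) i, 1)) =
          ∏ j : Fin n, M (pe n (j, 0)) (pe n (τ j, 1)) := by
        simp only [Perm.mul_apply]
        exact Equiv.prod_comp α (fun j => M (pe n (j, 0)) (pe n (τ j, 1)))
      rw [hprod]
      congr 1
      rw [Perm.sign_mul, hχ (Perm.sign τ * Perm.sign α), _root_.map_mul, ← hχ, ← hχ]
      calc ((Perm.sign α : ℤ) : ℝ) * (((Perm.sign τ : ℤ) : ℝ) * ((Perm.sign α : ℤ) : ℝ))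
          = ((Perm.sign α : ℤ) : ℝ) * ((Perm.sign α : ℤ) : ℝ) * ((Perm.sign τ : ℤ) : ℝ) := by
            ring
        _ = ((Perm.sign τ : ℤ) : ℝ) := by rw [hsq, one_mul]
    rw [Finset.sum_congr rfl fun α _ => hinner α, Finset.sum_const]
    simp [Fintype.card_perm, nsmul_eq_mul]
  -- determinant
  have hdet : Matrix.det (Matrix.of fun i j : Fin n =>
        M ⟨2 * (i : ℕ), by have := i.isLt; omega⟩
          ⟨2 * (j : ℕ) + 1, by have := j.isLt; omega⟩) =
      ∑ τ : Perm (Fin n), ((Perm.sign τ : ℤ) : ℝ) *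
        ∏ j : Fin n, M (pe n (j, 0)) (pe n (τ j, 1)) := by
    rw [← Matrix.det_transpose, Matrix.det_apply]
    refine Finset.sum_congr rfl fun τ _ => ?_
    simp only [Matrix.transpose_apply, Matrix.of_apply, pe_zero, pe_one, Units.smul_def,
      zsmul_eq_mul]
  -- assembling
  have hsum0 : ∑ σ : Equiv.Perm (Fin (2 * n)),
      ((Equiv.Perm.sign σ : ℤ) : ℝ) *
        ∏ i : Fin n,
          M (σ ⟨2 * (i : ℕ), by have := i.isLt; omega⟩)
            (σ ⟨2 * (i : ℕ) + 1, by have := i.isLt; omega⟩) = ∑ σ, F σ := by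
    refine Finset.sum_congr rfl fun σ _ => ?_
    simp only [hF, pe_zero, pe_one]
  rw [pfaffian, hsum0, sumA, sumB, sumC, hdet]
  have h2 : (2 : ℝ) ^ n ≠ 0 := by positivity
  have hfct : (n.factorial : ℝ) ≠ 0 := Nat.cast_ne_zero.mpr n.factorial_ne_zero
  field_simp
end

section
/- Let {X_n} be a sequence of random variables taking values in the nonnegative integers, and let X be a Poisson random variable with rate λ > 0. If for every k ≥ 0, lim_{n→∞} E[X_n (X_n − 1)⋯(X_n − k)] = λ^{k+1}, then X_n converges to X in distribution. -/
open MeasureTheory Filter Finset Topology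

/-!
Bonferroni: for an `ℕ`-valued `Y`, truncating the inclusion–exclusion formula
`P(Y = j) = ∑ₛ (-1)ˢ C(j+s, j) E[C(Y, j+s)]` after `M` terms errs by at most the next term
`C(j+M, j) E[C(Y, j+M)]`, because pointwise `∑_{s<M} (-1)ˢ C(m, s) = (-1)^(M-1) C(m-1, M-1)`.
The binomial moments `E[C(X_n, r)]` are the factorial moments divided by `r!`, so they tend to
`λʳ/r!`. Letting `n → ∞` and then `M → ∞`, the truncated sums tend to `e^(-λ) λʲ/j!` and the
error bounds to `λʲ/j! · λᴹ/M! → 0`.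
-/

theorem Nat.choose_mul_choose_add (x j s : ℕ) :
    (j + s).choose j * x.choose (j + s) = x.choose j * (x - j).choose s := by
  rw [mul_comm, Nat.choose_mul (Nat.le_add_right j s), Nat.add_sub_cancel_left]

theorem abs_ite_sub_sum_range_neg_one_pow_mul_choose_le (m M : ℕ) :
    |(if m = 0 then 1 else 0 : ℝ) - ∑ s ∈ range M, (-1) ^ s * (m.choose s : ℝ)| ≤ m.choose M := by
  rcases M with _ | M
  · split_ifs <;> simp
  rcases m with _ | m
  · simp [sum_range_succ']
  have h := congrArg (Int.cast : ℤ → ℝ)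
    (Int.alternating_sum_range_choose_eq_choose (n := m) (m := M))
  push_cast at h
  rw [h, if_neg m.succ_ne_zero, zero_sub, abs_neg, abs_mul, abs_pow, abs_neg, abs_one, one_pow,
    one_mul, Nat.abs_cast, Nat.choose_succ_succ', Nat.cast_add]
  exact le_add_of_nonneg_right (Nat.cast_nonneg _)

theorem abs_ite_sub_sum_range_neg_one_pow_mul_choose_mul_choose_le (x j M : ℕ) :
    |(if x = j then 1 else 0 : ℝ)
        - ∑ s ∈ range M, (-1) ^ s * ((j + s).choose j : ℝ) * x.choose (j + s)|
      ≤ (j + M).choose j * x.choose (j + M) := by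
  have hterm (s : ℕ) :
      ((j + s).choose j : ℝ) * x.choose (j + s) = x.choose j * (x - j).choose s := by
    exact_mod_cast Nat.choose_mul_choose_add x j s
  simp only [mul_assoc, hterm, mul_left_comm _ (x.choose j : ℝ)]
  rcases lt_or_ge x j with hxj | hjx
  · simp [Nat.choose_eq_zero_of_lt hxj, hxj.ne]
  obtain ⟨m, rfl⟩ := Nat.exists_eq_add_of_le hjx
  have hind : (if j + m = j then 1 else 0 : ℝ) = (j + m).choose j * (if m = 0 then 1 else 0) := by
    rcases m with _ | m <;> simp
  rw [hind, ← mul_sum, ← mul_sub, abs_mul, Nat.abs_cast, Nat.add_sub_cancel_left]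
  exact mul_le_mul_of_nonneg_left (abs_ite_sub_sum_range_neg_one_pow_mul_choose_le m M)
    (by positivity)

theorem abs_measure_sub_sum_range_neg_one_pow_mul_choose_mul_integral_le
    {Ω : Type*} [MeasurableSpace Ω] {μ : Measure Ω} [IsFiniteMeasure μ] {Y : Ω → ℕ}
    (hY : Measurable Y) (hint : ∀ r, Integrable (fun ω => ((Y ω).choose r : ℝ)) μ) (j M : ℕ) :
    |(μ {ω | Y ω = j}).toReal
        - ∑ s ∈ range M, (-1) ^ s * ((j + s).choose j : ℝ) * ∫ ω, ((Y ω).choose (j + s) : ℝ) ∂μ|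
      ≤ (j + M).choose j * ∫ ω, ((Y ω).choose (j + M) : ℝ) ∂μ := by
  have hset : MeasurableSet {ω | Y ω = j} := hY (measurableSet_singleton j)
  have hind : Integrable (fun ω => if Y ω = j then (1 : ℝ) else 0) μ :=
    ((integrable_const 1).indicator hset).congr <| .of_forall fun ω => by
      simp only [Set.indicator_apply, Set.mem_ofPred_eq]
  have hprob : (μ {ω | Y ω = j}).toReal = ∫ ω, if Y ω = j then (1 : ℝ) else 0 ∂μ := by
    simp only [← measureReal_def, ← integral_indicator_one hset, Set.indicator_apply,
      Set.mem_ofPred_eq, Pi.one_apply]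
  have hsum : Integrable (fun ω => ∑ s ∈ range M,
      (-1) ^ s * ((j + s).choose j : ℝ) * (Y ω).choose (j + s)) μ :=
    integrable_finsetSum _ fun s _ => (hint _).const_mul _
  calc _ = |∫ ω, ((if Y ω = j then 1 else 0 : ℝ)
          - ∑ s ∈ range M, (-1) ^ s * ((j + s).choose j : ℝ) * (Y ω).choose (j + s)) ∂μ| := by
        rw [integral_sub hind hsum, integral_finsetSum _ fun s _ => (hint _).const_mul _, hprob]
        simp only [integral_const_mul]
    _ ≤ ∫ ω, |(if Y ω = j then 1 else 0 : ℝ)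
          - ∑ s ∈ range M, (-1) ^ s * ((j + s).choose j : ℝ) * (Y ω).choose (j + s)| ∂μ :=
        abs_integral_le_integral_abs
    _ ≤ ∫ ω, ((j + M).choose j : ℝ) * (Y ω).choose (j + M) ∂μ :=
        integral_mono (hind.sub hsum).abs ((hint _).const_mul _)
          fun ω => abs_ite_sub_sum_range_neg_one_pow_mul_choose_mul_choose_le (Y ω) j M
    _ = _ := integral_const_mul _ _

theorem Nat.cast_choose_eq_prod_range_div {K : Type*} [Field K] [CharZero K] (x r : ℕ) :
    (x.choose r : K) = (∏ i ∈ range r, ((x : K) - i)) / r.factorial := by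
  rw [Nat.cast_choose_eq_descPochhammer_div, descPochhammer_eval_eq_prod_range]

theorem tendsto_integral_choose_of_tendsto_integral_prod_range {ι Ω : Type*} [MeasurableSpace Ω]
    {μ : Measure Ω} [IsProbabilityMeasure μ] {l : Filter ι} {X : ι → Ω → ℕ} {lam : ℝ}
    (hmom : ∀ k : ℕ, Tendsto (fun n => ∫ ω, ∏ i ∈ range (k + 1), ((X n ω : ℝ) - i) ∂μ)
      l (𝓝 (lam ^ (k + 1)))) (r : ℕ) :
    Tendsto (fun n => ∫ ω, ((X n ω).choose r : ℝ) ∂μ) l (𝓝 (lam ^ r / r.factorial)) := by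
  rcases r with _ | k
  · simpa using tendsto_const_nhds
  · simp_rw [Nat.cast_choose_eq_prod_range_div, integral_div]
    exact (hmom k).div_const _

theorem choose_mul_pow_div_factorial (lam : ℝ) (j s : ℕ) :
    ((j + s).choose j : ℝ) * (lam ^ (j + s) / (j + s).factorial)
      = lam ^ j / j.factorial * (lam ^ s / s.factorial) := by
  rw [Nat.cast_add_choose, pow_add]
  field_simp

theorem hasSum_neg_one_pow_mul_choose_mul_pow_div_factorial (lam : ℝ) (j : ℕ) :
    HasSum (fun s => (-1) ^ s * ((j + s).choose j : ℝ) * (lam ^ (j + s) / (j + s).factorial))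
      (Real.exp (-lam) * lam ^ j / j.factorial) := by
  rw [show Real.exp (-lam) * lam ^ j / j.factorial
      = lam ^ j / j.factorial * NormedSpace.exp (-lam) by rw [← Real.exp_eq_exp_ℝ]; ring]
  refine ((NormedSpace.expSeries_div_hasSum_exp (-lam)).mul_left _).congr_fun fun s => ?_
  rw [mul_assoc, choose_mul_pow_div_factorial, neg_pow]
  ring

theorem tendsto_choose_mul_pow_div_factorial_atTop (lam : ℝ) (j : ℕ) :
    Tendsto (fun M => ((j + M).choose j : ℝ) * (lam ^ (j + M) / (j + M).factorial))
      atTop (𝓝 0) := by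
  simp_rw [choose_mul_pow_div_factorial]
  simpa using (FloorSemiring.tendsto_pow_div_factorial_atTop lam).const_mul (lam ^ j / j.factorial)

theorem tendsto_of_forall_dist_le_of_tendsto {ι α : Type*} [PseudoMetricSpace α] {l : Filter ι}
    {p : ι → α} {a : ℕ → ι → α} {e : ℕ → ι → ℝ} {A : ℕ → α} {E : ℕ → ℝ} {L : α}
    (hdist : ∀ M i, dist (p i) (a M i) ≤ e M i)
    (ha : ∀ M, Tendsto (a M) l (𝓝 (A M))) (he : ∀ M, Tendsto (e M) l (𝓝 (E M)))
    (hA : Tendsto A atTop (𝓝 L)) (hE : Tendsto E atTop (𝓝 0)) :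
    Tendsto p l (𝓝 L) := by
  refine Metric.tendsto_nhds.2 fun ε hε => ?_
  obtain ⟨M, hAM, hEM⟩ := ((Metric.tendsto_nhds.1 hA (ε / 4) (by positivity)).and
    (hE.eventually (gt_mem_nhds (show (0 : ℝ) < ε / 4 by positivity)))).exists
  filter_upwards [Metric.tendsto_nhds.1 (ha M) (ε / 4) (by positivity),
    (he M).eventually (gt_mem_nhds (show E M < ε / 2 by linarith))] with i hai hei
  calc dist (p i) L ≤ dist (p i) (a M i) + dist (a M i) (A M) + dist (A M) L :=
        dist_triangle4 _ _ _ _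
    _ < ε := by linarith [hdist M i]

theorem poisson_method_of_moments_general
    {Ω : Type*} [MeasurableSpace Ω] (μ : Measure Ω) [IsProbabilityMeasure μ]
    (X : ℕ → Ω → ℕ) (hX : ∀ n, Measurable (X n))
    (hint : ∀ n k : ℕ,
      Integrable (fun ω => ∏ i ∈ Finset.range (k + 1), ((X n ω : ℝ) - (i : ℝ))) μ)
    (lam : ℝ)
    (hmom : ∀ k : ℕ,
      Tendsto (fun n => ∫ ω, ∏ i ∈ Finset.range (k + 1), ((X n ω : ℝ) - (i : ℝ)) ∂μ)
        atTop (nhds (lam ^ (k + 1)))) :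
    ∀ j : ℕ,
      Tendsto (fun n => (μ {ω | X n ω = j}).toReal) atTop
        (nhds (Real.exp (-lam) * lam ^ j / (j.factorial : ℝ))) := by
  intro j
  have hint_choose (n r : ℕ) : Integrable (fun ω => ((X n ω).choose r : ℝ)) μ := by
    rcases r with _ | k
    · simp
    · simpa only [Nat.cast_choose_eq_prod_range_div] using (hint n k).div_const _
  have hbinom := tendsto_integral_choose_of_tendsto_integral_prod_range hmom
  exact tendsto_of_forall_dist_le_of_tendsto
    (fun M n => abs_measure_sub_sum_range_neg_one_pow_mul_choose_mul_integral_le (hX n)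
      (hint_choose n) j M)
    (fun M => tendsto_finsetSum _ fun s _ => (hbinom (j + s)).const_mul _)
    (fun M => (hbinom (j + M)).const_mul _)
    (hasSum_neg_one_pow_mul_choose_mul_pow_div_factorial lam j).tendsto_sum_nat
    (tendsto_choose_mul_pow_div_factorial_atTop lam j)

/-- Method of moments for Poisson convergence: if the factorial moments
`E[X_n(X_n-1)⋯(X_n-k)]` converge to `λ^{k+1}` for every `k ≥ 0`, then the
ℕ-valued random variables `X_n` converge in distribution to a Poisson random
variable with rate `λ`; for ℕ-valued variables this is equivalent to pointwise
convergence of the probability mass functions. -/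
theorem poisson_method_of_moments
    {Ω : Type*} [MeasurableSpace Ω] (μ : Measure Ω) [IsProbabilityMeasure μ]
    (X : ℕ → Ω → ℕ) (hX : ∀ n, Measurable (X n))
    (hint : ∀ n k : ℕ,
      Integrable (fun ω => ∏ i ∈ Finset.range (k + 1), ((X n ω : ℝ) - (i : ℝ))) μ)
    (lam : ℝ) (hlam : 0 < lam)
    (hmom : ∀ k : ℕ,
      Tendsto (fun n => ∫ ω, ∏ i ∈ Finset.range (k + 1), ((X n ω : ℝ) - (i : ℝ)) ∂μ)
        atTop (nhds (lam ^ (k + 1)))) :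
    ∀ j : ℕ,
      Tendsto (fun n => (μ {ω | X n ω = j}).toReal) atTop
        (nhds (Real.exp (-lam) * lam ^ j / (j.factorial : ℝ))) :=
  poisson_method_of_moments_general μ X hX hint lam hmom
end
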